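/- (1) For every λ ∈ h and every x ∈ a, |F_λ(x)| ≤ F_{Re λ}(x). (2) For every λ ∈ a and every x ∈ a, F_λ(x) ≤ F_0(x) · e^{max_{w∈W} (wλ, x)}. -/

import Mathlib

open scoped BigOperators RealInnerProductSpace Classical

noncomputable section

variable {E : Type*} [NormedAddCommGroup E] [InnerProductSpace ℝ E] [FiniteDimensional ℝ E]

/-- The coroot `α∨ = 2α/|α|²`. -/
def coroot (α : E) : E := (2 / ⟪α, α⟫) • α

/-- The orthogonal reflection `r_α x = x - (α∨, x) α`. -/
def rRefl (α : E) (x : E) : E := x - ⟪coroot α, x⟫ • α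

/-- Data of an integral root system with positive subsystem and
a Weyl-invariant positive multiplicity function. -/
structure HOData (E : Type*) [NormedAddCommGroup E] [InnerProductSpace ℝ E] : Type _ where
  R : Finset E
  Rpos : Finset E
  k : E → ℝ
  k_pos : ∀ α ∈ R, 0 < k α
  root_ne_zero : ∀ α ∈ R, α ≠ 0
  pos_subset : Rpos ⊆ R
  pos_char : ∃ u : E, ∀ α ∈ R, (α ∈ Rpos ↔ 0 < ⟪α, u⟫)
  pos_or_neg : ∀ α ∈ R, α ∈ Rpos ∨ -α ∈ Rpos
  neg_mem : ∀ α ∈ R, -α ∈ R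
  integral : ∀ α ∈ R, ∀ β ∈ R, ∃ n : ℤ, ⟪coroot α, β⟫ = (n : ℝ)
  refl_mem : ∀ α ∈ R, ∀ β ∈ R, rRefl α β ∈ R
  k_inv : ∀ α ∈ R, ∀ β ∈ R, k (rRefl α β) = k β

/-- The Weyl group: the subgroup of linear isometries generated by the root reflections. -/
def weylGroup (D : HOData E) : Subgroup (E ≃ₗᵢ[ℝ] E) :=
  Subgroup.closure {w : E ≃ₗᵢ[ℝ] E | ∃ α ∈ D.R, ∀ x, w x = rRefl α x}

/-- `ρ = (1/2) Σ_{α ∈ R⁺} k_α α`. -/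
def rhoHO (D : HOData E) : E := (2:ℝ)⁻¹ • ∑ α ∈ D.Rpos, D.k α • α

/-- Regular points. -/
def HORegular (D : HOData E) (x : E) : Prop := ∀ α ∈ D.R, ⟪α, x⟫ ≠ 0

/-- The (open) positive Weyl chamber. -/
def posChamber (D : HOData E) : Set E := {x | ∀ α ∈ D.Rpos, 0 < ⟪α, x⟫}

/-- The positive indivisible roots `R₀⁺`. -/
def Rpos0 (D : HOData E) : Finset E := D.Rpos.filter (fun α => (2:ℝ)⁻¹ • α ∉ D.R)

/-- The Opdam function `G_λ` for a real parameter `λ`: an analytic function,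
normalized at `0`, satisfying the Cherednik differential-difference system. -/
def IsOpdamR (D : HOData E) (lam : E) (G : E → ℝ) : Prop :=
  AnalyticOnNhd ℝ G Set.univ ∧ G 0 = 1 ∧
  ∀ ξ x, HORegular D x →
    fderiv ℝ G x ξ =
      (∑ α ∈ D.Rpos, D.k α * ⟪α, ξ⟫ / (1 - Real.exp (-⟪α, x⟫)) * (G (rRefl α x) - G x))
      + ⟪rhoHO D + lam, ξ⟫ * G x

/-- The Opdam function `G_λ` for a complex parameter `λ = l1 + i l2 ∈ h`. -/
def IsOpdamC (D : HOData E) (l1 l2 : E) (G : E → ℂ) : Prop :=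
  AnalyticOnNhd ℝ G Set.univ ∧ G 0 = 1 ∧
  ∀ ξ x, HORegular D x →
    fderiv ℝ G x ξ =
      (∑ α ∈ D.Rpos, ((D.k α * ⟪α, ξ⟫ / (1 - Real.exp (-⟪α, x⟫)) : ℝ) : ℂ)
          * (G (rRefl α x) - G x))
      + (((⟪rhoHO D + l1, ξ⟫ : ℝ) : ℂ) + Complex.I * ((⟪l2, ξ⟫ : ℝ) : ℂ)) * G x

/-- The symmetrization `F(x) = |W|⁻¹ Σ_{w ∈ W} G(w x)` (real valued case). -/
def Fsym (D : HOData E) [Fintype (weylGroup D)] (G : E → ℝ) (x : E) : ℝ :=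
  (Fintype.card (weylGroup D) : ℝ)⁻¹ * ∑ w : weylGroup D, G (w.1 x)

/-- The symmetrization `F(x) = |W|⁻¹ Σ_{w ∈ W} G(w x)` (complex valued case). -/
def FsymC (D : HOData E) [Fintype (weylGroup D)] (G : E → ℂ) (x : E) : ℂ :=
  (Fintype.card (weylGroup D) : ℂ)⁻¹ * ∑ w : weylGroup D, G (w.1 x)

/-- `max_{w ∈ W} (w λ, x)`. -/
def maxW (D : HOData E) [Fintype (weylGroup D)] (lam x : E) : ℝ :=
  ⨆ w : weylGroup D, ⟪w.1 lam, x⟫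

/-!
At a regular point `x`, restrict the Opdam system to the rays `s ↦ s • w x`, `w ∈ W`: the values
`G_λ (s • w x)` solve a linear system of ODEs on `(0, 1]` whose off-diagonal coefficients
`k_α (α, w x) / (1 - e^{-s (α, w x)})` are positive, i.e. a cooperative system. Such systems obey a
maximum principle: if a finite family `δ_w` starts nonpositive and, wherever `δ_w` is maximal and
nonnegative, its upper Dini derivative is at most `K_w δ_w`, then Gronwall's inequality for
`max (0, max_w δ_w)` keeps the family nonpositive. Applied to `-G_λ`, to `G_λ - e^{s M} G_0` with
`M = max_w (w λ, x)`, and to `‖G_λ‖ - G_{Re λ}`, it gives `G_λ ≥ 0`, `G_λ ≤ e^M G_0` and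
`‖G_λ‖ ≤ G_{Re λ}` at regular points; averaging over `W` and density of the regular points give
the theorem.
-/
open scoped Topology
open Set Filter

/-- The upper right Dini derivative of `f` at `t` is at most `c`. It replaces the derivative
because `‖G_λ‖` and the maximum of a finite family need not be differentiable. -/
def UpperDiniLE (f : ℝ → ℝ) (t c : ℝ) : Prop :=
  ∀ r, c < r → ∀ᶠ z in 𝓝[>] t, f z - f t < r * (z - t)

namespace UpperDiniLE

variable {f g : ℝ → ℝ} {t c d : ℝ}

theorem mono (hf : UpperDiniLE f t c) (hcd : c ≤ d) : UpperDiniLE f t d :=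
  fun r hr => hf r (hcd.trans_lt hr)

theorem add (hf : UpperDiniLE f t c) (hg : UpperDiniLE g t d) :
    UpperDiniLE (fun z => f z + g z) t (c + d) := by
  intro r hr
  filter_upwards [hf (c + (r - c - d) / 2) (by linarith), hg (d + (r - c - d) / 2) (by linarith)]
    with z hfz hgz
  linarith

end UpperDiniLE

theorem HasDerivAt.upperDiniLE {f : ℝ → ℝ} {f' t : ℝ} (hf : HasDerivAt f f' t) :
    UpperDiniLE f t f' := by
  intro r hr
  have hslope : ∀ᶠ z in 𝓝[>] t, slope f t z < r :=
    ((hasDerivAt_iff_tendsto_slope.1 hf).eventually (eventually_lt_nhds hr)).filter_mono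
      (nhdsWithin_mono t fun z hz => ne_of_gt hz)
  filter_upwards [hslope, self_mem_nhdsWithin] with z hz (hzt : t < z)
  rwa [slope_def_field, div_lt_iff₀ (sub_pos.2 hzt)] at hz

theorem upperDiniLE_norm {F : Type*} [NormedAddCommGroup F] [InnerProductSpace ℝ F]
    {u : ℝ → F} {b : F} {t q : ℝ} (hu : HasDerivAt u b t)
    (hinner : ⟪u t, b⟫ ≤ q * ‖u t‖) (hzero : u t = 0 → ‖b‖ ≤ q) :
    UpperDiniLE (fun z => ‖u z‖) t q := by
  by_cases h0 : u t = 0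
  · intro r hr
    have hslope : ∀ᶠ z in 𝓝[>] t, ‖slope u t z‖ < r :=
      ((hasDerivAt_iff_tendsto_slope.1 hu).norm.eventually
        (eventually_lt_nhds ((hzero h0).trans_lt hr))).filter_mono
        (nhdsWithin_mono t fun z hz => ne_of_gt hz)
    filter_upwards [hslope, self_mem_nhdsWithin] with z hz (hzt : t < z)
    rw [slope, vsub_eq_sub, norm_smul, Real.norm_of_nonneg (inv_nonneg.2 (sub_pos.2 hzt).le),
      inv_mul_lt_iff₀ (sub_pos.2 hzt)] at hz
    linarith [norm_sub_norm_le (u z) (u t)]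
  · have hpos : 0 < ‖u t‖ := norm_pos_iff.2 h0
    have hsqrt := hu.norm_sq.sqrt (pow_pos hpos 2).ne'
    simp only [Real.sqrt_sq (norm_nonneg _)] at hsqrt
    refine hsqrt.upperDiniLE.mono ?_
    rw [div_le_iff₀ (by positivity)]
    linarith

theorem UpperDiniLE.finset_sup' {ι : Type*} [Fintype ι] [Nonempty ι] {δ : ι → ℝ → ℝ} {t c : ℝ}
    (hcont : ∀ i, ContinuousAt (δ i) t) (hc : 0 ≤ c)
    (hmax : ∀ i, δ i t = Finset.univ.sup' Finset.univ_nonempty (δ · t) → UpperDiniLE (δ i) t c) :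
    UpperDiniLE (fun z => Finset.univ.sup' Finset.univ_nonempty (δ · z)) t c := by
  intro r hr
  set M := Finset.univ.sup' Finset.univ_nonempty (δ · t)
  have hall : ∀ i, ∀ᶠ z in 𝓝[>] t, δ i z - M < r * (z - t) := by
    intro i
    rcases (Finset.le_sup' (δ · t) (Finset.mem_univ i)).eq_or_lt with hi | hi
    · have := hmax i hi r hr
      rwa [hi] at this
    · filter_upwards [eventually_nhdsWithin_of_eventually_nhds
        ((hcont i).eventually_lt continuousAt_const hi), self_mem_nhdsWithin]
        with z hz (hzt : t < z)
      nlinarith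
  filter_upwards [eventually_all.2 hall] with z hz
  obtain ⟨i, -, hi⟩ := Finset.exists_mem_eq_sup' Finset.univ_nonempty (δ · z)
  simpa only [hi] using hz i

theorem nonpos_of_upperDiniLE_mul_self {M : ℝ → ℝ} {L : ℝ} (hM : Continuous M) (h0 : M 0 ≤ 0)
    (hdini : ∀ t ∈ Ioo (0 : ℝ) 1, UpperDiniLE M t (L * M t)) : M 1 ≤ 0 := by
  have hgronwall : ∀ a ∈ Ioo (0 : ℝ) 1, M 1 ≤ M a * Real.exp (L * (1 - a)) := by
    intro a ha
    have := le_gronwallBound_of_liminf_deriv_right_le (f' := fun t => L * M t) (K := L) (ε := 0)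
      hM.continuousOn (fun t ht r hr => ?_) le_rfl (fun t _ => by simp) 1 ⟨ha.2.le, le_rfl⟩
    · rwa [gronwallBound_ε0] at this
    · refine ((hdini t ⟨ha.1.trans_le ht.1, ht.2⟩ r hr).and self_mem_nhdsWithin).frequently.mono ?_
      rintro z ⟨hz, hzt : t < z⟩
      rwa [inv_mul_lt_iff₀ (sub_pos.2 hzt), mul_comm]
  have hlim : Tendsto (fun a => M a * Real.exp (L * (1 - a))) (𝓝[>] 0)
      (𝓝 (M 0 * Real.exp L)) := by
    have hbound : Continuous fun a => M a * Real.exp (L * (1 - a)) := by fun_prop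
    simpa using tendsto_nhdsWithin_of_tendsto_nhds (hbound.tendsto 0)
  refine (ge_of_tendsto hlim ?_).trans (mul_nonpos_of_nonpos_of_nonneg h0 (Real.exp_pos L).le)
  filter_upwards [Ioo_mem_nhdsGT (zero_lt_one' ℝ)] with a ha using hgronwall a ha

theorem nonpos_of_upperDiniLE_at_max {ι : Type*} [Fintype ι] {δ : ι → ℝ → ℝ} (K : ι → ℝ)
    (hcont : ∀ i, Continuous (δ i)) (hzero : ∀ i, δ i 0 ≤ 0)
    (hdini : ∀ t ∈ Ioo (0 : ℝ) 1, ∀ i, 0 ≤ δ i t → (∀ j, δ j t ≤ δ i t) →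
      UpperDiniLE (δ i) t (K i * δ i t))
    (i : ι) : δ i 1 ≤ 0 := by
  -- `M = max (0, max_i δ_i)`; the zero member makes `M ≥ 0`, so that the single rate
  -- `L = ∑ |K i|` dominates `K i * M` for every `i`.
  let δ' : Option ι → ℝ → ℝ := fun o z => o.elim 0 (δ · z)
  let M : ℝ → ℝ := fun z => Finset.univ.sup' Finset.univ_nonempty (δ' · z)
  have hle : ∀ o z, δ' o z ≤ M z := fun o z => Finset.le_sup' (δ' · z) (Finset.mem_univ o)
  have hδ'c : ∀ o, Continuous (δ' o) := fun o => o.rec continuous_const hcont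
  have hL : 0 ≤ ∑ j, |K j| := Finset.sum_nonneg fun j _ => abs_nonneg _
  refine (hle (some i) 1).trans (nonpos_of_upperDiniLE_mul_self (L := ∑ j, |K j|)
    (Continuous.finset_sup'_apply _ fun o _ => hδ'c o)
    (Finset.sup'_le _ _ fun o _ => o.rec le_rfl hzero) fun t ht => ?_)
  refine UpperDiniLE.finset_sup' (fun o => (hδ'c o).continuousAt) (mul_nonneg hL (hle none t))
    fun o ho => ?_
  cases o with
  | none => exact (hasDerivAt_const t (0 : ℝ)).upperDiniLE.mono (mul_nonneg hL (hle none t))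
  | some j =>
    have hj : δ j t = M t := ho
    refine (hdini t ht j (hj ▸ hle none t) fun k => hj ▸ hle (some k) t).mono ?_
    rw [hj]
    exact mul_le_mul_of_nonneg_right ((le_abs_self _).trans
      (Finset.single_le_sum (fun k _ => abs_nonneg (K k)) (Finset.mem_univ j))) (hle none t)

section WeylGroup

variable {E : Type*} [NormedAddCommGroup E] [InnerProductSpace ℝ E]

theorem reflection_orthogonal_singleton_eq_rRefl (α x : E) :
    (ℝ ∙ α)ᗮ.reflection x = rRefl α x := by
  rw [Submodule.reflection_orthogonal_apply, Submodule.reflection_singleton_apply, rRefl, coroot,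
    real_inner_smul_left, real_inner_self_eq_norm_sq]
  simp only [RCLike.ofReal_real_eq_id, id_eq]
  module

theorem rRefl_rRefl (α x : E) : rRefl α (rRefl α x) = x := by
  rw [← reflection_orthogonal_singleton_eq_rRefl, ← reflection_orthogonal_singleton_eq_rRefl,
    Submodule.reflection_reflection]

theorem rRefl_smul (α : E) (t : ℝ) (x : E) : rRefl α (t • x) = t • rRefl α x := by
  simp only [← reflection_orthogonal_singleton_eq_rRefl, map_smul]

variable (D : HOData E)

theorem reflection_mem_weylGroup {α : E} (hα : α ∈ D.R) : (ℝ ∙ α)ᗮ.reflection ∈ weylGroup D :=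
  Subgroup.subset_closure ⟨α, hα, reflection_orthogonal_singleton_eq_rRefl α⟩

variable {D}

theorem weylGroup_apply_mem {w : E ≃ₗᵢ[ℝ] E} (hw : w ∈ weylGroup D) {β : E} (hβ : β ∈ D.R) :
    w β ∈ D.R := by
  induction hw using Subgroup.closure_induction'' generalizing β with
  | mem g hg =>
    obtain ⟨α, hα, hgα⟩ := hg
    exact hgα β ▸ D.refl_mem α hα β hβ
  | inv_mem g hg =>
    obtain ⟨α, hα, hgα⟩ := hg
    have hinv : g⁻¹ β = g β := g.injective (by
      rw [LinearIsometryEquiv.coe_inv, LinearIsometryEquiv.apply_symm_apply, hgα, hgα, rRefl_rRefl])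
    exact hinv ▸ hgα β ▸ D.refl_mem α hα β hβ
  | one => exact hβ
  | mul g h _ _ hg hh => exact hg (hh hβ)

theorem HORegular.smul {x : E} (hx : HORegular D x) {t : ℝ} (ht : t ≠ 0) :
    HORegular D (t • x) := fun α hα => by
  rw [real_inner_smul_right]
  exact mul_ne_zero ht (hx α hα)

theorem HORegular.weyl {x : E} (hx : HORegular D x) {w : E ≃ₗᵢ[ℝ] E} (hw : w ∈ weylGroup D) :
    HORegular D (w x) := fun α hα => by
  rw [real_inner_comm, w.inner_map_eq_flip, real_inner_comm]
  exact hx _ (weylGroup_apply_mem (inv_mem hw) hα)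

variable (D)

def weylReflect (α : E) (w : weylGroup D) : weylGroup D :=
  if h : α ∈ D.R then ⟨(ℝ ∙ α)ᗮ.reflection, reflection_mem_weylGroup D h⟩ * w else w

theorem weylReflect_apply {α : E} (hα : α ∈ D.R) (w : weylGroup D) (y : E) :
    (weylReflect D α w).1 y = rRefl α (w.1 y) := by
  rw [weylReflect, dif_pos hα]
  exact reflection_orthogonal_singleton_eq_rRefl α (w.1 y)

end WeylGroup

section Ray

variable {E : Type*} [NormedAddCommGroup E] [InnerProductSpace ℝ E] (D : HOData E)

theorem hasDerivAt_comp_smul {F : Type*} [NormedAddCommGroup F] [NormedSpace ℝ F] {G : E → F}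
    {t : ℝ} {y : E} (hG : DifferentiableAt ℝ G (t • y)) :
    HasDerivAt (fun s : ℝ => G (s • y)) (fderiv ℝ G (t • y) y) t :=
  hG.hasFDerivAt.comp_hasDerivAt t (by simpa using (hasDerivAt_id t).smul_const y)

/-- The coefficient of `G (r_α (t • y)) - G (t • y)` in the Opdam system at `t • y`, in the
direction `y`. -/
def rayCoeff (α : E) (t : ℝ) (y : E) : ℝ :=
  D.k α * ⟪α, y⟫ / (1 - Real.exp (-⟪α, t • y⟫))

theorem rayCoeff_pos {α y : E} (hα : α ∈ D.R) (hy : HORegular D y) {t : ℝ} (ht : 0 < t) :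
    0 < rayCoeff D α t y := by
  rw [rayCoeff, real_inner_smul_right, mul_div_assoc]
  refine mul_pos (D.k_pos α hα) ?_
  rcases (hy α hα).lt_or_gt with h | h
  · exact div_pos_of_neg_of_neg h
      (sub_neg.2 (Real.one_lt_exp_iff.2 (neg_pos.2 (mul_neg_of_pos_of_neg ht h))))
  · exact div_pos h (sub_pos.2 (Real.exp_lt_one_iff.2 (neg_neg_of_pos (mul_pos ht h))))

def rayGenerator (x : E) (t : ℝ) (F : Type*) [AddCommGroup F] [Module ℝ F] :
    (weylGroup D → F) →ₗ[ℝ] (weylGroup D → F) where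
  toFun f w := ∑ α ∈ D.Rpos, rayCoeff D α t (w.1 x) • (f (weylReflect D α w) - f w)
  map_add' f g := by
    ext w
    simp only [Pi.add_apply, add_sub_add_comm, smul_add, Finset.sum_add_distrib]
  map_smul' c f := by
    ext w
    simp only [Pi.smul_apply, ← smul_sub, smul_comm _ c, Finset.smul_sum, RingHom.id_apply]

theorem rayGenerator_apply (x : E) (t : ℝ) {F : Type*} [AddCommGroup F] [Module ℝ F]
    (f : weylGroup D → F) (w : weylGroup D) :
    rayGenerator D x t F f w =
      ∑ α ∈ D.Rpos, rayCoeff D α t (w.1 x) • (f (weylReflect D α w) - f w) := rfl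

theorem IsOpdamR.hasDerivAt_ray {lam : E} {G : E → ℝ} (hG : IsOpdamR D lam G) {x : E}
    (hx : HORegular D x) (w : weylGroup D) {t : ℝ} (ht : 0 < t) :
    HasDerivAt (fun s : ℝ => G (s • w.1 x))
      (rayGenerator D x t ℝ (fun v => G (t • v.1 x)) w + ⟪rhoHO D + lam, w.1 x⟫ * G (t • w.1 x))
      t := by
  have hd := hasDerivAt_comp_smul (hG.1 _ trivial).differentiableAt (t := t) (y := w.1 x)
  rw [hG.2.2 _ _ ((hx.weyl w.2).smul ht.ne')] at hd
  refine hd.congr_deriv (congrArg₂ _ (Finset.sum_congr rfl fun α hα => ?_) rfl)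
  simp only [smul_eq_mul, weylReflect_apply D (D.pos_subset hα), rRefl_smul]
  rfl

theorem IsOpdamC.hasDerivAt_ray {l1 l2 : E} {G : E → ℂ} (hG : IsOpdamC D l1 l2 G) {x : E}
    (hx : HORegular D x) (w : weylGroup D) {t : ℝ} (ht : 0 < t) :
    HasDerivAt (fun s : ℝ => G (s • w.1 x))
      (rayGenerator D x t ℂ (fun v => G (t • v.1 x)) w +
        (((⟪rhoHO D + l1, w.1 x⟫ : ℝ) : ℂ) + Complex.I * ((⟪l2, w.1 x⟫ : ℝ) : ℂ)) *
          G (t • w.1 x)) t := by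
  have hd := hasDerivAt_comp_smul (hG.1 _ trivial).differentiableAt (t := t) (y := w.1 x)
  rw [hG.2.2 _ _ ((hx.weyl w.2).smul ht.ne')] at hd
  refine hd.congr_deriv (congrArg₂ _ (Finset.sum_congr rfl fun α hα => ?_) rfl)
  simp only [← Complex.real_smul, weylReflect_apply D (D.pos_subset hα), rRefl_smul]
  rfl

variable {D}

theorem rayGenerator_nonpos_of_isMax {x : E} (hx : HORegular D x) {t : ℝ} (ht : 0 < t)
    {f : weylGroup D → ℝ} {w : weylGroup D} (hmax : ∀ v, f v ≤ f w) :
    rayGenerator D x t ℝ f w ≤ 0 :=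
  Finset.sum_nonpos fun _ hα => smul_nonpos_of_nonneg_of_nonpos
    (rayCoeff_pos D (D.pos_subset hα) (hx.weyl w.2) ht).le (sub_nonpos.2 (hmax _))

section InnerProductSpace

variable {F : Type*} [NormedAddCommGroup F] [InnerProductSpace ℝ F]

theorem inner_rayGenerator_le {x : E} (hx : HORegular D x) {t : ℝ} (ht : 0 < t)
    (f : weylGroup D → F) (w : weylGroup D) :
    ⟪f w, rayGenerator D x t F f w⟫ ≤ rayGenerator D x t ℝ (fun v => ‖f v‖) w * ‖f w‖ := by
  rw [rayGenerator_apply, rayGenerator_apply, inner_sum, Finset.sum_mul]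
  refine Finset.sum_le_sum fun α hα => ?_
  rw [real_inner_smul_right, inner_sub_right, real_inner_self_eq_norm_sq, smul_eq_mul, mul_assoc]
  exact mul_le_mul_of_nonneg_left (by nlinarith [real_inner_le_norm (f w) (f (weylReflect D α w))])
    (rayCoeff_pos D (D.pos_subset hα) (hx.weyl w.2) ht).le

theorem norm_rayGenerator_le_of_eq_zero {x : E} (hx : HORegular D x) {t : ℝ} (ht : 0 < t)
    {f : weylGroup D → F} {w : weylGroup D} (hf : f w = 0) :
    ‖rayGenerator D x t F f w‖ ≤ rayGenerator D x t ℝ (fun v => ‖f v‖) w := by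
  rw [rayGenerator_apply, rayGenerator_apply, hf, norm_zero]
  refine (norm_sum_le _ _).trans (Finset.sum_le_sum fun α hα => ?_)
  rw [sub_zero, sub_zero, norm_smul, smul_eq_mul,
    Real.norm_of_nonneg (rayCoeff_pos D (D.pos_subset hα) (hx.weyl w.2) ht).le]

end InnerProductSpace

end Ray

theorem Complex.real_inner_mul_self (a c : ℂ) : ⟪a, c * a⟫ = c.re * ‖a‖ ^ 2 := by
  rw [Complex.inner, mul_assoc, Complex.mul_conj, Complex.re_mul_ofReal, Complex.normSq_eq_norm_sq]

section Comparison

variable {E : Type*} [NormedAddCommGroup E] [InnerProductSpace ℝ E] {D : HOData E}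

theorem IsOpdamR.continuous {lam : E} {G : E → ℝ} (hG : IsOpdamR D lam G) : Continuous G :=
  continuousOn_univ.1 hG.1.continuousOn

theorem IsOpdamC.continuous {l1 l2 : E} {G : E → ℂ} (hG : IsOpdamC D l1 l2 G) : Continuous G :=
  continuousOn_univ.1 hG.1.continuousOn

variable [Fintype (weylGroup D)]

theorem IsOpdamR.nonneg {lam : E} {G : E → ℝ} (hG : IsOpdamR D lam G) {x : E}
    (hx : HORegular D x) : 0 ≤ G x := by
  have hGc := hG.continuous
  let δ : weylGroup D → ℝ → ℝ := fun w s => -G (s • w.1 x)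
  have hdini : ∀ t ∈ Ioo (0 : ℝ) 1, ∀ w : weylGroup D, 0 ≤ δ w t → (∀ v, δ v t ≤ δ w t) →
      UpperDiniLE (δ w) t (⟪rhoHO D + lam, w.1 x⟫ * δ w t) := by
    intro t ht w _ hmax
    have hgen := rayGenerator_nonpos_of_isMax hx ht.1 hmax
    rw [show (fun v => δ v t) = -fun v => G (t • v.1 x) from rfl, map_neg, Pi.neg_apply] at hgen
    refine (hG.hasDerivAt_ray D hx w ht.1).neg.upperDiniLE.mono ?_
    simp only [δ]
    linarith
  simpa [δ] using nonpos_of_upperDiniLE_at_max _ (fun w => by fun_prop)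
    (fun w => by simp [δ, hG.2.1]) hdini 1

theorem IsOpdamR.le_mul_exp {lam : E} {G G₀ : E → ℝ} (hG : IsOpdamR D lam G)
    (hG₀ : IsOpdamR D 0 G₀) {x : E} (hx : HORegular D x) {M : ℝ}
    (hM : ∀ w : weylGroup D, ⟪lam, w.1 x⟫ ≤ M) : G x ≤ G₀ x * Real.exp M := by
  have hGc := hG.continuous
  have hG₀c := hG₀.continuous
  let δ : weylGroup D → ℝ → ℝ := fun w s => G (s • w.1 x) - Real.exp (s * M) * G₀ (s • w.1 x)
  have hdini : ∀ t ∈ Ioo (0 : ℝ) 1, ∀ w : weylGroup D, 0 ≤ δ w t → (∀ v, δ v t ≤ δ w t) →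
      UpperDiniLE (δ w) t ((⟪rhoHO D, w.1 x⟫ + M) * δ w t) := by
    intro t ht w _ hmax
    have hgen := rayGenerator_nonpos_of_isMax hx ht.1 hmax
    rw [show (fun v => δ v t) =
        (fun v => G (t • v.1 x)) - Real.exp (t * M) • fun v => G₀ (t • v.1 x) from rfl,
      map_sub, map_smul] at hgen
    have hGw : 0 ≤ G (t • w.1 x) := hG.nonneg ((hx.weyl w.2).smul ht.1.ne')
    have hprod : (⟪lam, w.1 x⟫ - M) * G (t • w.1 x) ≤ 0 :=
      mul_nonpos_of_nonpos_of_nonneg (sub_nonpos.2 (hM w)) hGw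
    refine ((hG.hasDerivAt_ray D hx w ht.1).sub
      (((hasDerivAt_mul_const M).exp).mul (hG₀.hasDerivAt_ray D hx w ht.1))).upperDiniLE.mono ?_
    simp only [Pi.sub_apply, Pi.smul_apply, smul_eq_mul, inner_add_left,
      add_zero] at hgen ⊢
    -- `δ' = rayGenerator δ + (⟪ρ, w x⟫ + M) δ + (⟪lam, w x⟫ - M) G`, first and last terms `≤ 0`
    linarith
  rw [mul_comm]
  simpa [δ] using nonpos_of_upperDiniLE_at_max _ (fun w => by fun_prop)
    (fun w => by simp [δ, hG.2.1, hG₀.2.1]) hdini 1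

theorem IsOpdamC.norm_le {l1 l2 : E} {G : E → ℂ} {Gre : E → ℝ} (hG : IsOpdamC D l1 l2 G)
    (hre : IsOpdamR D l1 Gre) {x : E} (hx : HORegular D x) : ‖G x‖ ≤ Gre x := by
  have hGc := hG.continuous
  have hrec := hre.continuous
  let δ : weylGroup D → ℝ → ℝ := fun w s => ‖G (s • w.1 x)‖ - Gre (s • w.1 x)
  have hdini : ∀ t ∈ Ioo (0 : ℝ) 1, ∀ w : weylGroup D, 0 ≤ δ w t → (∀ v, δ v t ≤ δ w t) →
      UpperDiniLE (δ w) t (⟪rhoHO D + l1, w.1 x⟫ * δ w t) := by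
    intro t ht w _ hmax
    have hgen := rayGenerator_nonpos_of_isMax hx ht.1 hmax
    rw [show (fun v => δ v t) = (fun v => ‖G (t • v.1 x)‖) - fun v => Gre (t • v.1 x) from rfl,
      map_sub, Pi.sub_apply] at hgen
    have hnorm : UpperDiniLE (fun s => ‖G (s • w.1 x)‖) t
        (rayGenerator D x t ℝ (fun v => ‖G (t • v.1 x)‖) w +
          ⟪rhoHO D + l1, w.1 x⟫ * ‖G (t • w.1 x)‖) := by
      refine upperDiniLE_norm (hG.hasDerivAt_ray D hx w ht.1) ?_ fun ha => ?_
      · rw [inner_add_right, Complex.real_inner_mul_self]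
        have := inner_rayGenerator_le hx ht.1 (fun v => G (t • v.1 x)) w
        simp only [Complex.add_re, Complex.ofReal_re, Complex.mul_re, Complex.I_re,
          Complex.I_im, Complex.ofReal_im, zero_mul, one_mul, sub_zero, add_zero]
        linarith
      · rw [ha, mul_zero, add_zero, norm_zero, mul_zero, add_zero]
        exact norm_rayGenerator_le_of_eq_zero hx ht.1 ha
    have hsum := hnorm.add (hre.hasDerivAt_ray D hx w ht.1).neg.upperDiniLE
    simp only [← sub_eq_add_neg] at hsum
    refine hsum.mono ?_
    linarith
  simpa [δ] using nonpos_of_upperDiniLE_at_max _ (fun w => by fun_prop)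
    (fun w => by simp [δ, hG.2.1, hre.2.1]) hdini 1

end Comparison

section Symmetrization

variable {E : Type*} [NormedAddCommGroup E] [InnerProductSpace ℝ E] (D : HOData E)

theorem dense_setOf_HORegular [FiniteDimensional ℝ E] : Dense {x | HORegular D x} := by
  have hR : {x | HORegular D x} = ⋂ α ∈ (D.R : Set E), {x | ⟪α, x⟫ ≠ 0} := by
    ext x
    simp [HORegular]
  rw [hR]
  refine dense_biInter_of_isOpen (fun α _ => isOpen_ne_fun (by fun_prop) continuous_const)
    D.R.countable_toSet fun α hαR => ?_
  refine interior_eq_empty_iff_dense_compl.1 (Set.not_nonempty_iff_eq_empty.1 fun hne => ?_)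
  have hker := (LinearMap.ker (innerₛₗ ℝ α)).eq_top_of_nonempty_interior' hne
  have hα : α ∈ LinearMap.ker (innerₛₗ ℝ α) := hker ▸ Submodule.mem_top
  exact D.root_ne_zero α hαR (inner_self_eq_zero.1 hα)

theorem le_of_forall_HORegular_le [FiniteDimensional ℝ E] {f g : E → ℝ} (hf : Continuous f)
    (hg : Continuous g) (h : ∀ x, HORegular D x → f x ≤ g x) (x : E) : f x ≤ g x :=
  le_on_closure h hf.continuousOn hg.continuousOn
    ((dense_setOf_HORegular D).closure_eq ▸ mem_univ x)

variable [Fintype (weylGroup D)]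

theorem continuous_Fsym {G : E → ℝ} (hG : Continuous G) : Continuous (Fsym D G) := by
  unfold Fsym
  fun_prop

theorem continuous_FsymC {G : E → ℂ} (hG : Continuous G) : Continuous (FsymC D G) := by
  unfold FsymC
  fun_prop

theorem maxW_eq_sup' (lam x : E) :
    maxW D lam x = Finset.univ.sup' Finset.univ_nonempty fun w : weylGroup D => ⟪w.1 lam, x⟫ :=
  (Finset.sup'_univ_eq_ciSup _).symm

theorem continuous_maxW (lam : E) : Continuous (maxW D lam) := by
  simp only [funext (maxW_eq_sup' D lam)]
  exact Continuous.finset_sup'_apply _ fun w _ => by fun_prop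

theorem inner_le_maxW (lam x : E) (w : weylGroup D) : ⟪lam, w.1 x⟫ ≤ maxW D lam x := by
  rw [real_inner_comm, w.1.inner_map_eq_flip, real_inner_comm]
  exact le_ciSup (f := fun v : weylGroup D => ⟪v.1 lam, x⟫) (Finite.bddAbove_range _) w⁻¹

end Symmetrization

/-- (1) `|F_λ(x)| ≤ F_{Re λ}(x)` for all `λ ∈ h`, `x ∈ a`;
(2) `F_λ(x) ≤ F_0(x) · exp (max_{w ∈ W} (wλ, x))` for all `λ ∈ a`, `x ∈ a`. -/
theorem statement3 (D : HOData E) [Fintype (weylGroup D)] :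
    (∀ (l1 l2 : E) (G : E → ℂ) (Gre : E → ℝ), IsOpdamC D l1 l2 G → IsOpdamR D l1 Gre →
      ∀ x : E, ‖FsymC D G x‖ ≤ Fsym D Gre x) ∧
    (∀ (lam : E) (G Gzero : E → ℝ), IsOpdamR D lam G → IsOpdamR D 0 Gzero →
      ∀ x : E, Fsym D G x ≤ Fsym D Gzero x * Real.exp (maxW D lam x)) := by
  refine ⟨fun l1 l2 G Gre hG hre => ?_, fun lam G Gzero hG hG₀ => ?_⟩
  · refine le_of_forall_HORegular_le D (continuous_FsymC D hG.continuous).norm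
      (continuous_Fsym D hre.continuous) fun x hx => ?_
    rw [FsymC, Fsym, norm_mul, norm_inv, Complex.norm_natCast]
    gcongr
    exact (norm_sum_le _ _).trans (Finset.sum_le_sum fun w _ => hG.norm_le hre (hx.weyl w.2))
  · refine le_of_forall_HORegular_le D (continuous_Fsym D hG.continuous)
      ((continuous_Fsym D hG₀.continuous).mul (Real.continuous_exp.comp (continuous_maxW D lam)))
      fun x hx => ?_
    rw [Fsym, Fsym, mul_assoc, Finset.sum_mul]
    gcongr with w
    exact hG.le_mul_exp hG₀ (hx.weyl w.2) fun v => inner_le_maxW D lam x (v * w)
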